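/- Let φ be a flow on a locally compact metric space M and let (N, L) be a regular index pair for an isolated invariant set I, with exit time map τ₊ : N → [0,∞]. Then U := τ₊⁻¹([0,1]) is a neighborhood of L in N, and the map H : U × [0,1] → U defined by H(x,s) = φ(min{s, τ₊(x)}, x) is a strong deformation retraction of U onto L: H is continuous, H(x,0) = x for all x ∈ U, H(x,1) ∈ L for all x ∈ U, and H(x,s) = x for all x ∈ L and s ∈ [0,1]. In particular, L is a neighborhood deformation retract in N. -/

import Mathlib

open Set
open scoped Classical ENNReal

/-- The exit time map `τ₊ : N → [0,∞]` of an index pair `(N, L)` for the flow `φ`: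
`τ₊(x) = sup { t ≥ 0 : φ([0,t] × {x}) ⊆ N ∖ L }` for `x ∈ N ∖ L`, and `τ₊(x) = 0`
for `x ∈ L`. -/
noncomputable def exitTime {M : Type*} [TopologicalSpace M]
    (φ : ℝ → M → M) (N L : Set M) (x : M) : ℝ≥0∞ :=
  if x ∈ L then 0
  else sSup {τ : ℝ≥0∞ | ∃ t : ℝ, 0 ≤ t ∧ τ = ENNReal.ofReal t ∧
    ∀ s : ℝ, s ∈ Set.Icc 0 t → φ s x ∈ N \ L}

/-!
The orbit of a point `x ∈ N` with finite exit time `τ = τ₊(x)` stays in `N ∖ L` on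
`[0, τ)`, while for every `ε > 0` the exit set property forces it into `L` at some time in
`[τ, τ + ε]`. Since `L` is closed, `φ(τ, x) ∈ L`; in particular the orbit is still in `N`
at time `τ`, and `τ₊(φ(t, x)) ≤ τ₊(x)` for `t ≤ τ₊(x)`. Hence `H` maps `U × [0,1]` into
`U`, `H(x, 1) = φ(τ₊(x), x) ∈ L`, and continuity of `H` is that of `φ` and of `τ₊`.
-/

namespace ExitTime

variable {M : Type*} [TopologicalSpace M] {φ : ℝ → M → M} {N L : Set M} {x : M} {t : ℝ}

theorem exitTime_of_mem (hx : x ∈ L) : exitTime φ N L x = 0 := if_pos hx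

theorem ofReal_le_exitTime (hx : x ∉ L) (ht : 0 ≤ t) (h : ∀ s ∈ Icc 0 t, φ s x ∈ N \ L) :
    ENNReal.ofReal t ≤ exitTime φ N L x := by
  rw [exitTime, if_neg hx]
  exact le_sSup ⟨t, ht, rfl, h⟩

theorem flow_mem_diff_of_ofReal_lt_exitTime (ht : 0 ≤ t)
    (h : ENNReal.ofReal t < exitTime φ N L x) : φ t x ∈ N \ L := by
  have hx : x ∉ L := fun hx => by simp [exitTime_of_mem hx] at h
  rw [exitTime, if_neg hx] at h
  obtain ⟨_, ⟨t', -, rfl, hstay⟩, hlt⟩ := lt_sSup_iff.mp h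
  exact hstay t ⟨ht, ((ENNReal.ofReal_lt_ofReal_iff').mp hlt).1.le⟩

theorem exists_flow_mem_of_exitTime_lt (hφ_zero : ∀ x, φ 0 x = x)
    (h_exit : ∀ x ∈ N, ∀ t : ℝ, 0 ≤ t → φ t x ∉ N →
      ∃ t' ∈ Icc 0 t, φ t' x ∈ L)
    (hx : x ∈ N) (ht : 0 ≤ t) (h : exitTime φ N L x < ENNReal.ofReal t) :
    ∃ s ∈ Icc 0 t, φ s x ∈ L := by
  by_cases hxL : x ∈ L
  · exact ⟨0, ⟨le_rfl, ht⟩, by rwa [hφ_zero]⟩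
  by_contra! hnot
  have hstay : ∀ s ∈ Icc 0 t, φ s x ∈ N \ L := by
    refine fun s hs => ⟨?_, hnot s hs⟩
    by_contra hsN
    obtain ⟨t', ht', hL⟩ := h_exit x hx s hs.1 hsN
    exact hnot t' ⟨ht'.1, ht'.2.trans hs.2⟩ hL
  exact (ofReal_le_exitTime hxL ht hstay).not_gt h

theorem flow_toReal_exitTime_mem (hφx : Continuous fun t => φ t x)
    (hφ_zero : ∀ x, φ 0 x = x) (hL_closed : IsClosed L)
    (h_exit : ∀ x ∈ N, ∀ t : ℝ, 0 ≤ t → φ t x ∉ N →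
      ∃ t' ∈ Icc 0 t, φ t' x ∈ L)
    (hx : x ∈ N) (hfin : exitTime φ N L x ≠ ⊤) :
    φ (exitTime φ N L x).toReal x ∈ L := by
  set a := (exitTime φ N L x).toReal
  have hofa : ENNReal.ofReal a = exitTime φ N L x := ENNReal.ofReal_toReal hfin
  have hclosed : IsClosed {s | φ s x ∈ L} := hL_closed.preimage hφx
  suffices a ∈ closure {s | φ s x ∈ L} by rwa [hclosed.closure_eq] at this
  refine Metric.mem_closure_iff.mpr fun ε hε => ?_
  have hlt : exitTime φ N L x < ENNReal.ofReal (a + ε / 2) := by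
    rw [← hofa]
    exact (ENNReal.ofReal_lt_ofReal_iff (by positivity)).mpr (by linarith)
  obtain ⟨s, hs, hsL⟩ :=
    exists_flow_mem_of_exitTime_lt hφ_zero h_exit hx (by positivity) hlt
  have has : a ≤ s := by
    by_contra! hsa
    have : ENNReal.ofReal s < exitTime φ N L x := by
      rw [← hofa]
      exact (ENNReal.ofReal_lt_ofReal_iff (hs.1.trans_lt hsa)).mpr hsa
    exact (flow_mem_diff_of_ofReal_lt_exitTime hs.1 this).2 hsL
  refine ⟨s, hsL, ?_⟩
  rw [Real.dist_eq, abs_sub_comm, abs_of_nonneg (by linarith)]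
  linarith [hs.2]

theorem flow_mem_of_ofReal_le_exitTime (hLN : L ⊆ N)
    (h_hit : exitTime φ N L x ≠ ⊤ → φ (exitTime φ N L x).toReal x ∈ L)
    (ht : 0 ≤ t) (h : ENNReal.ofReal t ≤ exitTime φ N L x) : φ t x ∈ N := by
  rcases h.lt_or_eq with hlt | heq
  · exact (flow_mem_diff_of_ofReal_lt_exitTime ht hlt).1
  · have hfin : exitTime φ N L x ≠ ⊤ := heq ▸ ENNReal.ofReal_ne_top
    have : t = (exitTime φ N L x).toReal := by rw [← heq, ENNReal.toReal_ofReal ht]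
    exact hLN (this ▸ h_hit hfin)

theorem exitTime_flow_le (hφ_add : ∀ t s x, φ t (φ s x) = φ (t + s) x)
    (hfin : exitTime φ N L x ≠ ⊤) (h_hit : φ (exitTime φ N L x).toReal x ∈ L)
    (ht : 0 ≤ t) (h : ENNReal.ofReal t ≤ exitTime φ N L x) :
    exitTime φ N L (φ t x) ≤ exitTime φ N L x := by
  set a := (exitTime φ N L x).toReal
  have hofa : ENNReal.ofReal a = exitTime φ N L x := ENNReal.ofReal_toReal hfin
  have hta : t ≤ a := (ENNReal.ofReal_le_iff_le_toReal hfin).mp h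
  calc exitTime φ N L (φ t x) ≤ ENNReal.ofReal (a - t) := by
        by_contra! hlt
        have := (flow_mem_diff_of_ofReal_lt_exitTime (sub_nonneg.mpr hta) hlt).2
        rw [hφ_add, sub_add_cancel] at this
        exact this h_hit
    _ ≤ ENNReal.ofReal a := ENNReal.ofReal_le_ofReal (by linarith)
    _ = exitTime φ N L x := hofa

end ExitTime

open ExitTime

theorem exit_set_neighborhood_deformation_retract_general
    {M : Type*} [MetricSpace M]
    (φ : ℝ → M → M)
    (hφ_cont : Continuous fun p : ℝ × M => φ p.1 p.2)
    (hφ_zero : ∀ x, φ 0 x = x)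
    (hφ_add : ∀ t s x, φ t (φ s x) = φ (t + s) x)
    (N L : Set M)
    -- `(N, L)` is a pair of closed sets with `L ⊆ N`
    (hL_closed : IsClosed L) (hLN : L ⊆ N)
    -- `L` is the exit set of `N`
    (h_exit : ∀ x ∈ N, ∀ t : ℝ, 0 ≤ t → φ t x ∉ N → ∃ t' ∈ Set.Icc 0 t, φ t' x ∈ L)
    -- the index pair is regular: the exit time map is continuous on `N`
    (h_reg : ContinuousOn (exitTime φ N L) N)
    (U : Set M) (hU : U = {x ∈ N | exitTime φ N L x ≤ 1})
    (H : M → ℝ → M)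
    (hH : ∀ x s, H x s = φ (min (ENNReal.ofReal s) (exitTime φ N L x)).toReal x) :
    -- `U` is a neighborhood of `L` in `N`
    (L ⊆ U) ∧ (∀ x ∈ L, U ∈ nhdsWithin x N) ∧
    -- `H` maps `U × [0,1]` into `U` and is continuous there
    (∀ x ∈ U, ∀ s ∈ Set.Icc (0 : ℝ) 1, H x s ∈ U) ∧
    ContinuousOn (fun p : M × ℝ => H p.1 p.2) (U ×ˢ Set.Icc (0 : ℝ) 1) ∧
    -- `H` is a strong deformation retraction of `U` onto `L`
    (∀ x ∈ U, H x 0 = x) ∧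
    (∀ x ∈ U, H x 1 ∈ L) ∧
    (∀ x ∈ L, ∀ s ∈ Set.Icc (0 : ℝ) 1, H x s = x) := by
  subst hU
  set τ := exitTime φ N L
  have hfin {x} (hx : x ∈ {x ∈ N | τ x ≤ 1}) : τ x ≠ ⊤ :=
    ne_top_of_le_ne_top ENNReal.one_ne_top hx.2
  have h_hit {x} (hx : x ∈ N) (hfin : τ x ≠ ⊤) : φ (τ x).toReal x ∈ L :=
    flow_toReal_exitTime_mem (hφ_cont.comp (.prodMk_left x)) hφ_zero hL_closed h_exit hx hfin
  refine ⟨fun x hx => ⟨hLN hx, by simp [τ, exitTime_of_mem hx]⟩, fun x hx => ?_,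
    fun x hx s _ => ?_, ?_, fun x _ => by simp [hH, hφ_zero],
    fun x hx => by simpa [hH, min_eq_right hx.2] using h_hit hx.1 (hfin hx),
    fun x hx s _ => by simp [hH, τ, exitTime_of_mem hx, hφ_zero]⟩
  · have hτx : τ x < 1 := by simp [τ, exitTime_of_mem hx]
    filter_upwards [self_mem_nhdsWithin, (h_reg x (hLN hx)).eventually_lt_const hτx]
      with y hyN hy using ⟨hyN, hy.le⟩
  · have hle : ENNReal.ofReal (min (ENNReal.ofReal s) (τ x)).toReal ≤ τ x :=
      ENNReal.ofReal_toReal_le.trans (min_le_right _ _)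
    rw [hH]
    refine ⟨flow_mem_of_ofReal_le_exitTime hLN (h_hit hx.1) ENNReal.toReal_nonneg hle, ?_⟩
    exact (exitTime_flow_le hφ_add (hfin hx) (h_hit hx.1 (hfin hx)) ENNReal.toReal_nonneg
      hle).trans hx.2
  · have hmin : ContinuousOn (fun p : M × ℝ => (min (ENNReal.ofReal p.2) (τ p.1)).toReal)
        ({x ∈ N | τ x ≤ 1} ×ˢ Icc (0 : ℝ) 1) :=
      ENNReal.continuousOn_toReal.comp
        (ContinuousOn.inf (ENNReal.continuous_ofReal.comp continuous_snd).continuousOn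
          (h_reg.comp continuousOn_fst fun p hp => hp.1.1))
        fun _ _ => (min_le_left _ _).trans_lt ENNReal.ofReal_lt_top |>.ne
    exact (hφ_cont.comp_continuousOn (hmin.prodMk continuousOn_fst)).congr fun p _ => hH p.1 p.2

/-- Let `φ` be a flow on a locally compact metric space `M` and let `(N, L)` be a
regular index pair for an isolated invariant set `I`, with exit time map
`τ₊ : N → [0,∞]`.  Then `U := τ₊⁻¹([0,1])` is a neighborhood of `L` in `N`, and the
map `H : U × [0,1] → U` defined by `H(x,s) = φ(min{s, τ₊(x)}, x)` is a strong
deformation retraction of `U` onto `L`: `H` is continuous, `H(x,0) = x` for all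
`x ∈ U`, `H(x,1) ∈ L` for all `x ∈ U`, and `H(x,s) = x` for all `x ∈ L`, `s ∈ [0,1]`.
In particular, `L` is a neighborhood deformation retract in `N`. -/
theorem exit_set_neighborhood_deformation_retract
    {M : Type*} [MetricSpace M] [LocallyCompactSpace M]
    (φ : ℝ → M → M)
    (hφ_cont : Continuous fun p : ℝ × M => φ p.1 p.2)
    (hφ_zero : ∀ x, φ 0 x = x)
    (hφ_add : ∀ t s x, φ t (φ s x) = φ (t + s) x)
    (I N L : Set M)
    -- `(N, L)` is a pair of closed sets with `L ⊆ N`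
    (hN_closed : IsClosed N) (hL_closed : IsClosed L) (hLN : L ⊆ N)
    -- `I` is an invariant set and `closure (N ∖ L)` is an isolating neighborhood for `I`
    (hI_inv : ∀ t : ℝ, φ t '' I ⊆ I)
    (h_iso_cpt : IsCompact (closure (N \ L)))
    (h_iso_int : I ⊆ interior (closure (N \ L)))
    (h_iso_max : ∀ S : Set M, (∀ t : ℝ, φ t '' S ⊆ S) → S ⊆ closure (N \ L) → S ⊆ I)
    -- `L` is positively invariant relative to `N`
    (h_posInv : ∀ x ∈ L, ∀ t : ℝ, 0 ≤ t →
      (∀ s ∈ Set.Icc 0 t, φ s x ∈ N) → ∀ s ∈ Set.Icc 0 t, φ s x ∈ L)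
    -- `L` is the exit set of `N`
    (h_exit : ∀ x ∈ N, ∀ t : ℝ, 0 ≤ t → φ t x ∉ N → ∃ t' ∈ Set.Icc 0 t, φ t' x ∈ L)
    -- the index pair is regular: the exit time map is continuous on `N`
    (h_reg : ContinuousOn (exitTime φ N L) N)
    (U : Set M) (hU : U = {x ∈ N | exitTime φ N L x ≤ 1})
    (H : M → ℝ → M)
    (hH : ∀ x s, H x s = φ (min (ENNReal.ofReal s) (exitTime φ N L x)).toReal x) :
    -- `U` is a neighborhood of `L` in `N`
    (L ⊆ U) ∧ (∀ x ∈ L, U ∈ nhdsWithin x N) ∧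
    -- `H` maps `U × [0,1]` into `U` and is continuous there
    (∀ x ∈ U, ∀ s ∈ Set.Icc (0 : ℝ) 1, H x s ∈ U) ∧
    ContinuousOn (fun p : M × ℝ => H p.1 p.2) (U ×ˢ Set.Icc (0 : ℝ) 1) ∧
    -- `H` is a strong deformation retraction of `U` onto `L`
    (∀ x ∈ U, H x 0 = x) ∧
    (∀ x ∈ U, H x 1 ∈ L) ∧
    (∀ x ∈ L, ∀ s ∈ Set.Icc (0 : ℝ) 1, H x s = x) :=
  exit_set_neighborhood_deformation_retract_general φ hφ_cont hφ_zero hφ_add N L hL_closed hLN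
    h_exit h_reg U hU H hH
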